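/- Let H and W be finite-dimensional subspaces of continuously differentiable real-valued functions on ℝ such that: (i) the derivative operator maps H onto W; (ii) the functions in H whose derivative vanishes identically are exactly the constant functions; and (iii) W contains the constant functions. Then the linear trace map H → ℝ², u ↦ (u(0), u(1)), is surjective; equivalently, the trace space {(u(0), u(1)) : u ∈ H} has dimension 2. -/

import Mathlib

/-- Let `H` and `W` be finite-dimensional subspaces of continuously
differentiable real-valued functions on `ℝ` such that: (i) the derivative
operator maps `H` onto `W`; (ii) the functions in `H` with identically
vanishing derivative are exactly the constant functions; (iii) `W` contains
the constants. Then the trace map `u ↦ (u 0, u 1)` is surjective from `H`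
onto `ℝ²`. -/
theorem stmt_14 (H W : Submodule ℝ (ℝ → ℝ))
    (hHfin : FiniteDimensional ℝ H) (hWfin : FiniteDimensional ℝ W)
    (hHsmooth : ∀ u ∈ H, ContDiff ℝ 1 u)
    (hWsmooth : ∀ w ∈ W, ContDiff ℝ 1 w)
    (hmap : ∀ u ∈ H, deriv u ∈ W)
    (hsurj : ∀ w ∈ W, ∃ u ∈ H, deriv u = w)
    (hker : {u : ℝ → ℝ | u ∈ H ∧ deriv u = 0} =
      {u : ℝ → ℝ | ∃ c : ℝ, u = fun _ => c})
    (hconst : ∀ c : ℝ, (fun _ => c : ℝ → ℝ) ∈ W) :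
    ∀ a b : ℝ, ∃ u ∈ H, u 0 = a ∧ u 1 = b := by
  intro a b
  -- constants are in H
  have hcH : ∀ c : ℝ, (fun _ => c : ℝ → ℝ) ∈ H := by
    intro c
    have : (fun _ => c : ℝ → ℝ) ∈ {u : ℝ → ℝ | ∃ c : ℝ, u = fun _ => c} := ⟨c, rfl⟩
    rw [← hker] at this
    exact this.1
  -- get u0 ∈ H with deriv u0 = 1
  obtain ⟨u0, hu0H, hu0d⟩ := hsurj (fun _ => (1 : ℝ)) (hconst 1)
  have hdiff : Differentiable ℝ u0 :=
    (hHsmooth u0 hu0H).differentiable one_ne_zero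
  -- u0 1 - u0 0 = 1
  have hgap : u0 1 - u0 0 = 1 := by
    have hg : ∀ x : ℝ, deriv (fun y => u0 y - y) x = 0 := by
      intro x
      rw [deriv_fun_sub (hdiff x) differentiableAt_fun_id]
      simp [hu0d]
    have hgd : Differentiable ℝ (fun y : ℝ => u0 y - y) :=
      hdiff.sub differentiable_fun_id
    have := is_const_of_deriv_eq_zero hgd hg 1 0
    simp only [sub_zero] at this
    linarith
  refine ⟨fun x => (a - (b - a) * u0 0) + (b - a) * u0 x, ?_, ?_, ?_⟩
  · exact H.add_mem (hcH _) (H.smul_mem (b - a) hu0H)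
  · show a - (b - a) * u0 0 + (b - a) * u0 0 = a
    ring
  · show a - (b - a) * u0 0 + (b - a) * u0 1 = b
    have h1 : u0 1 = u0 0 + 1 := by linarith
    rw [h1]; ring
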